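/- Let V be a finite type with Fintype.card V = n and E : V → V → Prop a relation with no directed cycles (¬ Relation.TransGen E v v for every v). Suppose the longest directed path in (V,E) has length ℓ with ℓ ≥ 1 (there exists a directed path of length ℓ and no directed path of length ℓ+1). If E is strongly reduced, then the number of edges of (V,E) is at most t(n−ℓ+1, 2) + T(n, ℓ, 1), where t(m, 2) is the number of edges of SimpleGraph.turanGraph m 2 and T(n, ℓ, 1) := C(n, 2) − C(n−ℓ+1, 2). -/

import Mathlib

/-- A directed path of length `k` in `(V, E)`: a map `p : Fin (k+1) → V` with
`E (p i) (p (i+1))` for all `i < k`. -/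
def IsDirPath {V : Type*} (E : V → V → Prop) (k : ℕ) (p : Fin (k + 1) → V) : Prop :=
  ∀ i : Fin k, E (p i.castSucc) (p i.succ)

/-- A directed path of length `k` from `v` to `w`. -/
def IsDirPathFromTo {V : Type*} (E : V → V → Prop) (k : ℕ) (p : Fin (k + 1) → V)
    (v w : V) : Prop :=
  p 0 = v ∧ p (Fin.last k) = w ∧ IsDirPath E k p

/-- A topological order of `(V, E)`: an injective map `f : V → ℕ` with `f u < f v`
whenever `E u v`. -/
def IsTopologicalOrder {V : Type*} (E : V → V → Prop) (f : V → ℕ) : Prop :=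
  Function.Injective f ∧ ∀ u v : V, E u v → f u < f v

/-- `L` is the list of the elements of `S`, sorted in strictly increasing order of `f`. -/
def IsSortedListOf {V : Type*} (f : V → ℕ) (S : Set V) (L : List V) : Prop :=
  (∀ x : V, x ∈ L ↔ x ∈ S) ∧ L.Pairwise fun x y => f x < f y

/-- The list `L` is a directed path from `v` to `w`: its first element is `v`, its last
element is `w`, and consecutive elements are related by `E`. -/
def IsDirPathList {V : Type*} (E : V → V → Prop) (v w : V) (L : List V) : Prop :=
  L.head? = some v ∧ L.getLast? = some w ∧ L.Chain' E

/-- `E` is strongly reduced: for every topological order `f`, every pair of vertices `v, w`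
and every two directed paths `γ, γ'` from `v` to `w`, the list of vertices of the union of
the vertex sets of `γ` and `γ'`, sorted in strictly increasing order of `f`, is a directed
path from `v` to `w`. -/
def StronglyReduced {V : Type*} (E : V → V → Prop) : Prop :=
  ∀ f : V → ℕ, IsTopologicalOrder E f →
    ∀ (v w : V) (k k' : ℕ) (γ : Fin (k + 1) → V) (γ' : Fin (k' + 1) → V),
      IsDirPathFromTo E k γ v w → IsDirPathFromTo E k' γ' v w →
        ∀ L : List V, IsSortedListOf f (Set.range γ ∪ Set.range γ') L →
          IsDirPathList E v w L

/-- The number of edges of `(V, E)`: the cardinality of the finset of pairs `(u, v)`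
with `E u v`. -/
noncomputable def edgeCount {V : Type*} [Fintype V] (E : V → V → Prop) : ℕ :=
  letI := Classical.decPred fun p : V × V => E p.1 p.2
  (Finset.univ.filter fun p : V × V => E p.1 p.2).card

/-- `t(n, r)`: the number of edges of the Turán graph `SimpleGraph.turanGraph n r`. -/
def turanEdges (n r : ℕ) : ℕ :=
  (SimpleGraph.turanGraph n r).edgeFinset.card

/-- `T(n, ℓ, 1) = C(n, 2) - C(n - ℓ + 1, 2)` (truncated subtraction in `ℕ`). -/
def intervalTuran (n ℓ : ℕ) : ℕ := Nat.choose n 2 - Nat.choose (n - ℓ + 1) 2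

/-!
The edges of `E` are comparable pairs of the reachability order `TransGen E`, a partial order in
which every chain has at most `ℓ + 1` elements, since a longer chain would give a directed path of
length `ℓ + 1`. Strong reducedness makes every open interval `(a, b)` of this order a chain:
vertices `x, y` strictly between `a` and `b` lie on paths from `a` to `b`, and the sorted union of
these two paths is again a path, which contains both.

In a poset on `N` elements whose chains have at most `h + 1` elements and whose open intervals are
chains, there are at most `C(N, 2) - C(m, 2) + t(m, 2)` comparable pairs, `m = N - h + 1`. This
goes by deleting one element: take `a` minimal and `b ≥ a` maximal. Whatever lies above `a` and
below `b` lies in `(a, b)`, a chain which together with `a, b` has at most `h + 1` elements, so one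
of `a, b` is comparable to at most `(N + h - 1) / 2` elements, which is exactly what the induction
can absorb since `t(m, 2) - t(m - 1, 2) = ⌊m / 2⌋`.
-/

open Finset Relation

theorem turanEdges_succ_two (k : ℕ) : turanEdges (k + 1) 2 = turanEdges k 2 + (k + 1) / 2 := by
  induction k with
  | zero => simp [turanEdges, SimpleGraph.card_edgeFinset_turanGraph]
  | succ k ih =>
    have h : turanEdges (k + 2) 2 = turanEdges k 2 + k + 1 := by
      simpa [turanEdges] using SimpleGraph.card_edgeFinset_turanGraph_add (n := k) (r := 2)
    rw [show k + 1 + 1 = k + 2 from rfl]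
    omega

def HasChainIntervals (α : Type*) [Preorder α] : Prop :=
  ∀ a b : α, IsChain (· < ·) (Set.Ioo a b)

section PartialOrder

variable {α : Type*} [PartialOrder α] [DecidableLT α]

def ltPairs (s : Finset α) : Finset (α × α) := {p ∈ s ×ˢ s | p.1 < p.2}

def comparabilityDegree (s : Finset α) (z : α) : ℕ := #{y ∈ s | z < y} + #{y ∈ s | y < z}

theorem card_ltPairs_le_card_ltPairs_erase_add [DecidableEq α] (s : Finset α) (z : α) :
    #(ltPairs s) ≤ #(ltPairs (s.erase z)) + comparabilityDegree s z := by
  have hsub : ltPairs s ⊆ ltPairs (s.erase z) ∪ ({y ∈ s | z < y}.image (z, ·) ∪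
      {y ∈ s | y < z}.image (·, z)) := by
    rintro ⟨a, b⟩ hab
    simp only [ltPairs, mem_filter, mem_product] at hab
    by_cases ha : a = z
    · subst ha; simp [hab]
    by_cases hb : b = z
    · subst hb; simp [hab]
    simp [ltPairs, ha, hb, hab]
  grw [card_le_card hsub, card_union_le, card_union_le, card_image_le, card_image_le]
  rfl

theorem comparabilityDegree_lt_card {s : Finset α} {z : α} (hz : z ∈ s) :
    comparabilityDegree s z < #s := by
  classical
  have hdisj : Disjoint {y ∈ s | z < y} {y ∈ s | y < z} :=
    disjoint_filter.2 fun y _ hzy hyz => (hzy.trans hyz).false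
  have hsub : {y ∈ s | z < y} ∪ {y ∈ s | y < z} ⊆ s.erase z := by
    intro y
    simp only [mem_union, mem_filter, mem_erase]
    rintro (⟨hy, h⟩ | ⟨hy, h⟩)
    exacts [⟨h.ne', hy⟩, ⟨h.ne, hy⟩]
  have := card_le_card hsub
  rw [card_union_of_disjoint hdisj, card_erase_of_mem hz] at this
  have := card_pos.2 ⟨z, hz⟩
  unfold comparabilityDegree
  omega

theorem exists_two_mul_comparabilityDegree_lt (hI : HasChainIntervals α) {s : Finset α} {h : ℕ}
    (hchain : ∀ t ⊆ s, IsChain (· < ·) (t : Set α) → #t ≤ h + 1) (hs : s.Nonempty) :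
    ∃ z ∈ s, 2 * comparabilityDegree s z < #s + h := by
  classical
  obtain ⟨a, ha⟩ := s.exists_minimal hs
  obtain ⟨b, hab, hb⟩ := s.exists_le_maximal ha.prop
  have hdeg_a : comparabilityDegree s a = #{y ∈ s | a < y} := by
    rw [comparabilityDegree, filter_eq_empty_iff.2 fun y hy => ha.not_lt hy, card_empty, add_zero]
  have hdeg_b : comparabilityDegree s b = #{y ∈ s | y < b} := by
    rw [comparabilityDegree, filter_eq_empty_iff.2 fun y hy => hb.not_gt hy, card_empty, zero_add]
  have hs_pos := card_pos.2 hs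
  rcases hab.eq_or_lt with rfl | hab
  · refine ⟨a, ha.prop, ?_⟩
    have : {y ∈ s | a < y} = ∅ := filter_eq_empty_iff.2 fun y hy => hb.not_gt hy
    rw [hdeg_a, this, card_empty]
    omega
  set U := {y ∈ s | a < y}
  set D := {y ∈ s | y < b}
  have hUD : #(U ∩ D) + 2 ≤ h + 1 := by
    have hchainI : IsChain (· < ·) ((insert a (insert b (U ∩ D)) : Finset α) : Set α) := by
      rw [coe_insert, coe_insert]
      refine (((hI a b).mono fun y hy => ?_).insert fun y hy _ => ?_).insert fun y hy _ => ?_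
      · simp only [U, D, coe_inter, coe_filter, Set.mem_inter_iff, Set.mem_ofPred_eq] at hy
        exact ⟨hy.1.2, hy.2.2⟩
      · simp only [U, D, mem_coe, mem_inter, mem_filter] at hy
        exact Or.inr hy.2.2
      · simp only [U, D, Set.mem_insert_iff, mem_coe, mem_inter, mem_filter] at hy
        rcases hy with rfl | hy
        exacts [Or.inl hab, Or.inl hy.1.2]
    have hcard : #(insert a (insert b (U ∩ D))) = #(U ∩ D) + 2 := by
      rw [card_insert_of_notMem, card_insert_of_notMem]
      · simp [U, D]
      · simp [U, D, hab.ne]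
    have hsub : insert a (insert b (U ∩ D)) ⊆ s :=
      insert_subset ha.prop (insert_subset hb.prop (inter_subset_left.trans (filter_subset _ _)))
    have := hchain _ hsub hchainI
    omega
  have hUD_card := card_union_add_card_inter U D
  have hUD_sub : #(U ∪ D) ≤ #s :=
    card_le_card (union_subset (filter_subset _ _) (filter_subset _ _))
  rcases le_total #U #D with hle | hle
  · exact ⟨a, ha.prop, by omega⟩
  · exact ⟨b, hb.prop, by omega⟩

theorem card_ltPairs_add_choose_le (hI : HasChainIntervals α) (h : ℕ) (s : Finset α)
    (hchain : ∀ t ⊆ s, IsChain (· < ·) (t : Set α) → #t ≤ h + 1) :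
    #(ltPairs s) + (#s - h + 1).choose 2 ≤ (#s).choose 2 + turanEdges (#s - h + 1) 2 := by
  classical
  induction s using Finset.strongInduction with
  | H s ih =>
  rcases s.eq_empty_or_nonempty with rfl | hs
  · simp [ltPairs]
  obtain ⟨z, hz, hdeg⟩ := exists_two_mul_comparabilityDegree_lt hI hchain hs
  have hIH := ih (s.erase z) (erase_ssubset hz) fun t ht => hchain t (ht.trans (erase_subset _ _))
  have hpairs := card_ltPairs_le_card_ltPairs_erase_add s z
  have hdeg' := comparabilityDegree_lt_card hz
  have hchoose (k : ℕ) : (k + 1).choose 2 = k.choose 2 + k := by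
    rw [Nat.choose_succ_succ', Nat.choose_one_right, add_comm]
  obtain ⟨N, hN⟩ := Nat.exists_eq_add_one.2 (card_pos.2 hs)
  rw [card_erase_of_mem hz, hN, Nat.add_sub_cancel] at hIH
  rw [hN] at hdeg hdeg' ⊢
  rcases lt_or_ge N h with hNh | hNh
  · rw [show N + 1 - h + 1 = N - h + 1 by omega, hchoose N]
    omega
  · rw [show N + 1 - h + 1 = N - h + 1 + 1 by omega, turanEdges_succ_two, hchoose, hchoose N]
    omega

end PartialOrder

section Digraph

variable {V : Type*} {E : V → V → Prop}

theorem IsTopologicalOrder.lt_of_transGen {f : V → ℕ} (hf : IsTopologicalOrder E f) {u v : V}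
    (h : TransGen E u v) : f u < f v := by
  induction h with
  | single h => exact hf.2 _ _ h
  | tail _ h ih => exact ih.trans (hf.2 _ _ h)

theorem exists_isTopologicalOrder [Finite V] (hacyc : ∀ v : V, ¬TransGen E v v) :
    ∃ f : V → ℕ, IsTopologicalOrder E f := by
  classical
  have : IsStrictOrder V (TransGen E) := { irrefl := hacyc }
  let := partialOrderOfSO (TransGen E)
  have : Fintype (LinearExtension V) := Fintype.ofFinite V
  have hrank : StrictMono fun b : LinearExtension V => #{c | c < b} := fun b b' hbb' =>
    card_lt_card ⟨fun c hc => mem_filter.2 ⟨mem_univ c, (mem_filter.1 hc).2.trans hbb'⟩,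
      fun h => (mem_filter.1 (h (mem_filter.2 ⟨mem_univ b, hbb'⟩))).2.false⟩
  have hext : StrictMono (toLinearExtension : V →o LinearExtension V) :=
    toLinearExtension.monotone.strictMono_of_injective fun _ _ h => h
  exact ⟨_, hrank.injective.comp fun _ _ h => h, fun u v huv => hrank (hext (.single huv))⟩

theorem IsDirPathFromTo.snoc {k : ℕ} {p : Fin (k + 1) → V} {u a b : V}
    (hp : IsDirPathFromTo E k p u a) (hab : E a b) :
    IsDirPathFromTo E (k + 1) (Fin.snoc p b : Fin (k + 2) → V) u b := by
  obtain ⟨h0, hlast, hpath⟩ := hp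
  refine ⟨by simpa using h0, by simp, fun i => ?_⟩
  cases i using Fin.lastCases with
  | last => simpa [hlast] using hab
  | cast j =>
    rw [Fin.snoc_castSucc, ← Fin.castSucc_succ, Fin.snoc_castSucc]
    exact hpath j

theorem IsDirPathFromTo.exists_extend {k : ℕ} {p : Fin (k + 1) → V} {u a b : V}
    (hp : IsDirPathFromTo E k p u a) (hab : TransGen E a b) :
    ∃ k' > k, ∃ p' : Fin (k' + 1) → V,
      IsDirPathFromTo E k' p' u b ∧ Set.range p ⊆ Set.range p' := by
  induction hab with
  | single h => exact ⟨k + 1, k.lt_succ_self, _, hp.snoc h, by simp [Fin.range_snoc]⟩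
  | tail _ h ih =>
    obtain ⟨k', hk, p', hp', hsub⟩ := ih
    exact ⟨k' + 1, by omega, _, hp'.snoc h, hsub.trans (by simp [Fin.range_snoc])⟩

theorem exists_isDirPathFromTo_mem_range {a x b : V} (hax : TransGen E a x)
    (hxb : TransGen E x b) :
    ∃ (k : ℕ) (γ : Fin (k + 1) → V), IsDirPathFromTo E k γ a b ∧ x ∈ Set.range γ := by
  have hp₀ : IsDirPathFromTo E 0 (fun _ => a) a a := ⟨rfl, rfl, fun i => i.elim0⟩
  obtain ⟨k, -, p, hp, -⟩ := hp₀.exists_extend hax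
  obtain ⟨k', -, p', hp', hsub⟩ := hp.exists_extend hxb
  exact ⟨k', p', hp', hsub ⟨_, hp.2.1⟩⟩

theorem exists_isSortedListOf {f : V → ℕ} (hf : Function.Injective f) {S : Set V}
    (hS : S.Finite) : ∃ L : List V, IsSortedListOf f S L := by
  let := LinearOrder.lift' f hf
  exact ⟨hS.toFinset.sort, by simp, hS.toFinset.sortedLT_sort.pairwise⟩

theorem transGen_or_transGen_of_isChain {L : List V} (hL : L.IsChain E) {x y : V} (hx : x ∈ L)
    (hy : y ∈ L) (hxy : x ≠ y) : TransGen E x y ∨ TransGen E y x := by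
  have hP : L.Pairwise (TransGen E) := List.isChain_iff_pairwise.1 (hL.imp fun _ _ => .single)
  have : Std.Symm fun u v => TransGen E u v ∨ TransGen E v u := ⟨fun _ _ => Or.symm⟩
  have hP' : L.Pairwise fun u v => TransGen E u v ∨ TransGen E v u := hP.imp Or.inl
  exact hP'.forall hx hy hxy

theorem StronglyReduced.transGen_or_transGen_of_between (hsr : StronglyReduced E) {f : V → ℕ}
    (hf : IsTopologicalOrder E f) {a b x y : V} (hax : TransGen E a x) (hxb : TransGen E x b)
    (hay : TransGen E a y) (hyb : TransGen E y b) (hxy : x ≠ y) :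
    TransGen E x y ∨ TransGen E y x := by
  obtain ⟨k, γ, hγ, hx⟩ := exists_isDirPathFromTo_mem_range hax hxb
  obtain ⟨k', γ', hγ', hy⟩ := exists_isDirPathFromTo_mem_range hay hyb
  obtain ⟨L, hL⟩ :=
    exists_isSortedListOf hf.1 ((Set.finite_range γ).union (Set.finite_range γ'))
  exact transGen_or_transGen_of_isChain (hsr f hf a b k k' γ γ' hγ hγ' L hL).2.2
    ((hL.1 x).2 (.inl hx)) ((hL.1 y).2 (.inr hy)) hxy

theorem IsDirPath.comp_castLE {k m : ℕ} {p : Fin (k + 1) → V} (hp : IsDirPath E k p)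
    (hmk : m ≤ k) : IsDirPath E m (p ∘ Fin.castLE (Nat.succ_le_succ hmk)) :=
  fun i => hp (Fin.castLE hmk i)

theorem exists_isDirPath_of_isChain {f : V → ℕ} (hf : IsTopologicalOrder E f) {t : Finset V}
    (ht : IsChain (TransGen E) (t : Set V)) (hne : t.Nonempty) :
    ∃ k, #t ≤ k + 1 ∧ ∃ p : Fin (k + 1) → V, IsDirPath E k p := by
  classical
  suffices ∀ t : Finset V, IsChain (TransGen E) (t : Set V) → t.Nonempty →
      ∃ b ∈ t, ∃ k, #t ≤ k + 1 ∧
        ∃ (p : Fin (k + 1) → V) (u : V), IsDirPathFromTo E k p u b by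
    obtain ⟨_, _, k, hk, p, _, hp⟩ := this t ht hne
    exact ⟨k, hk, p, hp.2.2⟩
  intro t
  induction t using Finset.induction_on_max_value f with
  | empty => simp
  | insert a s has hfa ih =>
    intro ht _
    rcases s.eq_empty_or_nonempty with rfl | hs
    · exact ⟨a, mem_singleton_self a, 0, by simp, fun _ => a, a, rfl, rfl, fun i => i.elim0⟩
    obtain ⟨b, hb, k, hk, p, u, hp⟩ := ih (ht.mono (by simp)) hs
    have hba : TransGen E b a := by
      refine (ht (by simp [hb]) (by simp) (ne_of_mem_of_not_mem hb has)).resolve_right ?_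
      exact fun hab => (hfa b hb).not_gt (hf.lt_of_transGen hab)
    obtain ⟨k', hk', p', hp', -⟩ := hp.exists_extend hba
    exact ⟨a, mem_insert_self a s, k', by rw [card_insert_of_notMem has]; omega, p', u, hp'⟩

theorem card_le_of_isChain_transGen {ℓ : ℕ}
    (hmax : ¬∃ p : Fin (ℓ + 1 + 1) → V, IsDirPath E (ℓ + 1) p) {f : V → ℕ}
    (hf : IsTopologicalOrder E f) (t : Finset V) (ht : IsChain (TransGen E) (t : Set V)) :
    #t ≤ ℓ + 1 := by
  by_contra! hlong
  obtain ⟨k, hk, p, hp⟩ := exists_isDirPath_of_isChain hf ht (card_pos.1 (by omega))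
  exact hmax ⟨_, hp.comp_castLE (by omega : ℓ + 1 ≤ k)⟩

theorem edgeCount_le_card_ltPairs [Fintype V] [PartialOrder V] [DecidableLT V]
    (hE : ∀ u v, E u v → u < v) : edgeCount E ≤ #(ltPairs (univ : Finset V)) := by
  unfold edgeCount
  refine card_le_card fun p hp => ?_
  simp only [ltPairs, mem_filter, mem_product, mem_univ, true_and] at hp ⊢
  exact hE _ _ hp

end Digraph

theorem stronglyReduced_edge_bound_general {V : Type*} [Fintype V] (E : V → V → Prop) (n ℓ : ℕ)
    (hcard : Fintype.card V = n)
    (hacyc : ∀ v : V, ¬Relation.TransGen E v v)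
    (hmax : ¬∃ p : Fin (ℓ + 1 + 1) → V, IsDirPath E (ℓ + 1) p)
    (hsr : StronglyReduced E) :
    edgeCount E ≤ turanEdges (n - ℓ + 1) 2 + intervalTuran n ℓ := by
  classical
  obtain ⟨f, hf⟩ := exists_isTopologicalOrder hacyc
  have : IsStrictOrder V (TransGen E) := { irrefl := hacyc }
  -- the `<` of this order is `TransGen E` by definition
  let := partialOrderOfSO (TransGen E)
  have hI : HasChainIntervals V := fun a b x hx y hy hxy =>
    hsr.transGen_or_transGen_of_between hf hx.1 hx.2 hy.1 hy.2 hxy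
  have hbound := card_ltPairs_add_choose_le hI ℓ univ fun t _ =>
    card_le_of_isChain_transGen hmax hf t
  have hedges := edgeCount_le_card_ltPairs (E := E) fun _ _ => .single
  rw [card_univ, hcard] at hbound
  unfold intervalTuran
  omega

theorem stronglyReduced_edge_bound {V : Type*} [Fintype V] (E : V → V → Prop) (n ℓ : ℕ)
    (hcard : Fintype.card V = n)
    (hacyc : ∀ v : V, ¬Relation.TransGen E v v)
    (hℓ : 1 ≤ ℓ)
    (hlong : ∃ p : Fin (ℓ + 1) → V, IsDirPath E ℓ p)
    (hmax : ¬∃ p : Fin (ℓ + 1 + 1) → V, IsDirPath E (ℓ + 1) p)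
    (hsr : StronglyReduced E) :
    edgeCount E ≤ turanEdges (n - ℓ + 1) 2 + intervalTuran n ℓ :=
  stronglyReduced_edge_bound_general E n ℓ hcard hacyc hmax hsr
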